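/- Let P be the probability measure with density 3/2 on [0, 1/3] and 9/4 on [2/3, 7/9] ∪ [8/9, 1]. Then ∫ min((x - 1/6)², (x - 5/6)²) dP = 11/972, and for every two-point set α ⊂ ℝ, ∫ min_{a ∈ α}(x - a)² dP ≥ 11/972; thus {1/6, 5/6} is an optimal set of two-means with V₂ = 11/972. -/

import Mathlib

open MeasureTheory Set

/-- The density: `3/2` on `[0,1/3]`, `9/4` on `[2/3,7/9] ∪ [8/9,1]`, `0` elsewhere. -/
noncomputable def g (x : ℝ) : ℝ :=
  Set.indicator (Set.Icc (0 : ℝ) (1 / 3)) (fun _ => (3 : ℝ) / 2) x +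
    Set.indicator (Set.Icc ((2 : ℝ) / 3) (7 / 9) ∪ Set.Icc ((8 : ℝ) / 9) 1)
      (fun _ => (9 : ℝ) / 4) x

/-- The piecewise uniform probability measure with finitely many pieces. -/
noncomputable def Q : Measure ℝ :=
  MeasureTheory.volume.withDensity (fun x => ENNReal.ofReal (g x))


/-!
For `a ≤ b` the integrand is `(x - a)²` left of the midpoint `(a + b) / 2` and `(x - b)²` right
of it, so on each of the three intervals carrying `Q` the integral is an explicit cubic polynomial
in `a, b`, determined by the position of the midpoint among the endpoints
`0, 1/3, 2/3, 7/9, 8/9, 1`.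
In each of the seven resulting cases this polynomial is bounded below by `11/972`; the bound is
attained with the midpoint `1/2` in the gap `[1/3, 2/3]` and `a = 1/6`, `b = 5/6`, the centroids
of `Q` restricted to either side of the gap.
-/

lemma g_nonneg (x : ℝ) : 0 ≤ g x :=
  add_nonneg (indicator_nonneg (fun _ _ => by norm_num) x)
    (indicator_nonneg (fun _ _ => by norm_num) x)

lemma measurable_g : Measurable g :=
  (measurable_const.indicator measurableSet_Icc).add
    (measurable_const.indicator (measurableSet_Icc.union measurableSet_Icc))

lemma integral_Q_eq_integral_g_mul (F : ℝ → ℝ) : ∫ x, F x ∂Q = ∫ x, g x * F x := by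
  rw [Q, integral_withDensity_eq_integral_toReal_smul measurable_g.ennreal_ofReal
    (ae_of_all _ fun _ => ENNReal.ofReal_lt_top)]
  simp only [ENNReal.toReal_ofReal (g_nonneg _), smul_eq_mul]

section IndicatorConstMul

variable {s : Set ℝ} {F : ℝ → ℝ}

lemma integrable_indicator_const_mul (hs : IsCompact s) (hF : Continuous F) (c : ℝ) :
    Integrable fun x => s.indicator (fun _ => c) x * F x := by
  simp_rw [← indicator_mul_left]
  exact (integrable_indicator_iff hs.measurableSet).2
    ((continuous_const.mul hF).continuousOn.integrableOn_compact hs)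

lemma integral_indicator_const_mul (hs : MeasurableSet s) (c : ℝ) :
    ∫ x, s.indicator (fun _ => c) x * F x = c * ∫ x in s, F x := by
  simp_rw [← indicator_mul_left]
  rw [integral_indicator hs, integral_const_mul]

end IndicatorConstMul

lemma setIntegral_Icc_eq_intervalIntegral {l u : ℝ} (h : l ≤ u) (F : ℝ → ℝ) :
    ∫ x in Icc l u, F x = ∫ x in l..u, F x := by
  rw [integral_Icc_eq_integral_Ioc, intervalIntegral.integral_of_le h]

lemma integral_Q_eq {F : ℝ → ℝ} (hF : Continuous F) :
    ∫ x, F x ∂Q = 3 / 2 * (∫ x in (0 : ℝ)..1 / 3, F x)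
      + 9 / 4 * (∫ x in (2 / 3 : ℝ)..7 / 9, F x) + 9 / 4 * ∫ x in (8 / 9 : ℝ)..1, F x := by
  have hdisj : Disjoint (Icc (2 / 3 : ℝ) (7 / 9)) (Icc (8 / 9) 1) :=
    disjoint_left.2 fun _ h₁ h₂ => by linarith [h₁.2, h₂.1]
  simp only [integral_Q_eq_integral_g_mul, g, add_mul]
  rw [integral_add (integrable_indicator_const_mul isCompact_Icc hF _)
      (integrable_indicator_const_mul (isCompact_Icc.union isCompact_Icc) hF _),
    integral_indicator_const_mul measurableSet_Icc,
    integral_indicator_const_mul (measurableSet_Icc.union measurableSet_Icc),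
    setIntegral_union hdisj measurableSet_Icc hF.integrableOn_Icc hF.integrableOn_Icc,
    setIntegral_Icc_eq_intervalIntegral (by norm_num),
    setIntegral_Icc_eq_intervalIntegral (by norm_num),
    setIntegral_Icc_eq_intervalIntegral (by norm_num)]
  ring

lemma intervalIntegral_sub_sq (l u c : ℝ) :
    ∫ x in l..u, (x - c) ^ 2 = ((u - c) ^ 3 - (l - c) ^ 3) / 3 := by
  rw [intervalIntegral.integral_comp_sub_right (· ^ 2) c, integral_pow]
  ring

section MinSq

variable {a b l u : ℝ}

lemma continuous_min_sq (a b : ℝ) : Continuous fun x : ℝ => min ((x - a) ^ 2) ((x - b) ^ 2) := by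
  fun_prop

lemma intervalIntegral_min_sq_of_le_midpoint (hab : a ≤ b) (hu : u ≤ (a + b) / 2) (hlu : l ≤ u) :
    ∫ x in l..u, min ((x - a) ^ 2) ((x - b) ^ 2) = ((u - a) ^ 3 - (l - a) ^ 3) / 3 := by
  rw [← intervalIntegral_sub_sq]
  refine intervalIntegral.integral_congr fun x hx => min_eq_left ?_
  rw [uIcc_of_le hlu] at hx
  nlinarith [mul_nonneg (sub_nonneg.2 hab) (show 0 ≤ a + b - 2 * x by linarith [hx.2])]

lemma intervalIntegral_min_sq_of_midpoint_le (hab : a ≤ b) (hl : (a + b) / 2 ≤ l) (hlu : l ≤ u) :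
    ∫ x in l..u, min ((x - a) ^ 2) ((x - b) ^ 2) = ((u - b) ^ 3 - (l - b) ^ 3) / 3 := by
  rw [← intervalIntegral_sub_sq]
  refine intervalIntegral.integral_congr fun x hx => min_eq_right ?_
  rw [uIcc_of_le hlu] at hx
  nlinarith [mul_nonneg (sub_nonneg.2 hab) (show 0 ≤ 2 * x - a - b by linarith [hx.1])]

lemma intervalIntegral_min_sq_of_midpoint_mem (hab : a ≤ b) (hl : l ≤ (a + b) / 2)
    (hu : (a + b) / 2 ≤ u) :
    ∫ x in l..u, min ((x - a) ^ 2) ((x - b) ^ 2) =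
      (((a + b) / 2 - a) ^ 3 - (l - a) ^ 3) / 3 + ((u - b) ^ 3 - ((a + b) / 2 - b) ^ 3) / 3 := by
  rw [← intervalIntegral_min_sq_of_le_midpoint hab le_rfl hl,
    ← intervalIntegral_min_sq_of_midpoint_le hab le_rfl hu,
    intervalIntegral.integral_add_adjacent_intervals
      ((continuous_min_sq a b).intervalIntegrable _ _)
      ((continuous_min_sq a b).intervalIntegrable _ _)]

end MinSq

section MidpointInsidePiece

variable {a b : ℝ}

lemma bound_of_midpoint_mem_first_piece (hab : a ≤ b) (h0 : 0 ≤ (a + b) / 2)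
    (h1 : (a + b) / 2 ≤ 1 / 3) :
    11 / 972 ≤ 3 / 2 * ((((a + b) / 2 - a) ^ 3 - (0 - a) ^ 3) / 3
        + ((1 / 3 - b) ^ 3 - ((a + b) / 2 - b) ^ 3) / 3)
      + 9 / 4 * (((7 / 9 - b) ^ 3 - (2 / 3 - b) ^ 3) / 3)
      + 9 / 4 * (((1 - b) ^ 3 - (8 / 9 - b) ^ 3) / 3) := by
  have hd : 0 ≤ b - a := by linarith
  have hs₀ : 0 ≤ a + b := by linarith
  have hs₁ : 0 ≤ 2 / 3 - (a + b) := by linarith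
  nlinarith [sq_nonneg (b - 5 / 6), mul_nonneg hd hs₀, mul_nonneg hd hs₁, mul_nonneg hs₀ hs₁,
    mul_nonneg (mul_nonneg hd hs₀) hs₁, mul_nonneg hd (sq_nonneg (b - a))]

lemma bound_of_midpoint_mem_second_piece (hab : a ≤ b) (h2 : 2 / 3 ≤ (a + b) / 2)
    (h3 : (a + b) / 2 ≤ 7 / 9) :
    11 / 972 ≤ 3 / 2 * (((1 / 3 - a) ^ 3 - (0 - a) ^ 3) / 3)
      + 9 / 4 * ((((a + b) / 2 - a) ^ 3 - (2 / 3 - a) ^ 3) / 3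
        + ((7 / 9 - b) ^ 3 - ((a + b) / 2 - b) ^ 3) / 3)
      + 9 / 4 * (((1 - b) ^ 3 - (8 / 9 - b) ^ 3) / 3) := by
  have hd : 0 ≤ b - a := by linarith
  have hs₀ : 0 ≤ a + b - 4 / 3 := by linarith
  have hs₁ : 0 ≤ 14 / 9 - (a + b) := by linarith
  nlinarith [sq_nonneg (a - 1 / 6), sq_nonneg (b - 17 / 18), mul_nonneg hd hs₀, mul_nonneg hd hs₁,
    mul_nonneg hs₀ hs₁, mul_nonneg (mul_nonneg hd hs₀) hs₁, mul_nonneg hd (sq_nonneg (b - a))]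

lemma bound_of_midpoint_mem_third_piece (hab : a ≤ b) (h4 : 8 / 9 ≤ (a + b) / 2)
    (h5 : (a + b) / 2 ≤ 1) :
    11 / 972 ≤ 3 / 2 * (((1 / 3 - a) ^ 3 - (0 - a) ^ 3) / 3)
      + 9 / 4 * (((7 / 9 - a) ^ 3 - (2 / 3 - a) ^ 3) / 3)
      + 9 / 4 * ((((a + b) / 2 - a) ^ 3 - (8 / 9 - a) ^ 3) / 3
        + ((1 - b) ^ 3 - ((a + b) / 2 - b) ^ 3) / 3) := by
  have hd : 0 ≤ b - a := by linarith
  have hs₀ : 0 ≤ a + b - 16 / 9 := by linarith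
  have hs₁ : 0 ≤ 2 - (a + b) := by linarith
  nlinarith [sq_nonneg (a - 1 / 6), sq_nonneg (a - 13 / 18), mul_nonneg hd hs₀, mul_nonneg hd hs₁,
    mul_nonneg hs₀ hs₁, mul_nonneg (mul_nonneg hd hs₀) hs₁, mul_nonneg hd (sq_nonneg (b - a))]

end MidpointInsidePiece

lemma le_integral_min_sq_of_le {a b : ℝ} (hab : a ≤ b) :
    11 / 972 ≤ ∫ x, min ((x - a) ^ 2) ((x - b) ^ 2) ∂Q := by
  rw [integral_Q_eq (continuous_min_sq a b)]
  rcases le_total ((a + b) / 2) 0 with h0 | h0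
  · rw [intervalIntegral_min_sq_of_midpoint_le hab h0 (by norm_num),
      intervalIntegral_min_sq_of_midpoint_le hab (by linarith) (by norm_num),
      intervalIntegral_min_sq_of_midpoint_le hab (by linarith) (by norm_num)]
    nlinarith [sq_nonneg (b - 1 / 2)]
  rcases le_total ((a + b) / 2) (1 / 3) with h1 | h1
  · rw [intervalIntegral_min_sq_of_midpoint_mem hab h0 h1,
      intervalIntegral_min_sq_of_midpoint_le hab (by linarith) (by norm_num),
      intervalIntegral_min_sq_of_midpoint_le hab (by linarith) (by norm_num)]
    exact bound_of_midpoint_mem_first_piece hab h0 h1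
  rcases le_total ((a + b) / 2) (2 / 3) with h2 | h2
  · rw [intervalIntegral_min_sq_of_le_midpoint hab h1 (by norm_num),
      intervalIntegral_min_sq_of_midpoint_le hab h2 (by norm_num),
      intervalIntegral_min_sq_of_midpoint_le hab (by linarith) (by norm_num)]
    nlinarith [sq_nonneg (a - 1 / 6), sq_nonneg (b - 5 / 6)]
  rcases le_total ((a + b) / 2) (7 / 9) with h3 | h3
  · rw [intervalIntegral_min_sq_of_le_midpoint hab (by linarith) (by norm_num),
      intervalIntegral_min_sq_of_midpoint_mem hab h2 h3,
      intervalIntegral_min_sq_of_midpoint_le hab (by linarith) (by norm_num)]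
    exact bound_of_midpoint_mem_second_piece hab h2 h3
  rcases le_total ((a + b) / 2) (8 / 9) with h4 | h4
  · rw [intervalIntegral_min_sq_of_le_midpoint hab (by linarith) (by norm_num),
      intervalIntegral_min_sq_of_le_midpoint hab h3 (by norm_num),
      intervalIntegral_min_sq_of_midpoint_le hab h4 (by norm_num)]
    nlinarith [sq_nonneg (a - 19 / 54), sq_nonneg (b - 17 / 18)]
  rcases le_total ((a + b) / 2) 1 with h5 | h5
  · rw [intervalIntegral_min_sq_of_le_midpoint hab (by linarith) (by norm_num),
      intervalIntegral_min_sq_of_le_midpoint hab (by linarith) (by norm_num),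
      intervalIntegral_min_sq_of_midpoint_mem hab h4 h5]
    exact bound_of_midpoint_mem_third_piece hab h4 h5
  rw [intervalIntegral_min_sq_of_le_midpoint hab (by linarith) (by norm_num),
    intervalIntegral_min_sq_of_le_midpoint hab (by linarith) (by norm_num),
    intervalIntegral_min_sq_of_le_midpoint hab h5 (by norm_num)]
  nlinarith [sq_nonneg (a - 1 / 2)]

theorem stmt_14 :
    (∫ x, min ((x - 1 / 6) ^ 2) ((x - 5 / 6) ^ 2) ∂Q) = 11 / 972 ∧
    ∀ a₁ a₂ : ℝ, 11 / 972 ≤ ∫ x, min ((x - a₁) ^ 2) ((x - a₂) ^ 2) ∂Q := by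
  refine ⟨?_, fun a₁ a₂ => ?_⟩
  · rw [integral_Q_eq (continuous_min_sq _ _),
      intervalIntegral_min_sq_of_le_midpoint (by norm_num) (by norm_num) (by norm_num),
      intervalIntegral_min_sq_of_midpoint_le (by norm_num) (by norm_num) (by norm_num),
      intervalIntegral_min_sq_of_midpoint_le (by norm_num) (by norm_num) (by norm_num)]
    norm_num
  rcases le_total a₁ a₂ with h | h
  · exact le_integral_min_sq_of_le h
  · simpa only [min_comm] using le_integral_min_sq_of_le h
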